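/- arXiv:math/0404507 — 8 statements merged into one kernel-verified Lean document; each statement's English description precedes it below -/
import Mathlib

section
/- Let 𝔏 be a Lie conformal algebra over a field k of characteristic zero, generated by a subset 𝒢 with weight function wt : 𝒢 → ℕ, and let 𝔏'_i be the associated filtration. Then for all i, j ∈ ℤ and n ∈ ℕ one has 𝔏'_i [n] 𝔏'_j ⊆ 𝔏'_{i+j+n}, and D 𝔏'_i ⊆ 𝔏'_{i−1}. -/
open Finset

/-- A (bundled) conformal algebra over a field `𝕜`. -/
structure ConfAlg (𝕜 : Type) [Field 𝕜] where
  A : Type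
  [ag : AddCommGroup A]
  [mo : Module 𝕜 A]
  mul : ℕ → A →ₗ[𝕜] A →ₗ[𝕜] A
  D : A →ₗ[𝕜] A
  dmul_zero : ∀ a b : A, mul 0 (D a) b = 0
  dmul_succ : ∀ (n : ℕ) (a b : A), mul (n + 1) (D a) b = (-(n + 1 : 𝕜)) • mul n a b
  leibniz : ∀ (n : ℕ) (a b : A), D (mul n a b) = mul n (D a) b + mul n a (D b)
  loc : ∀ a b : A, ∃ N : ℕ, ∀ n : ℕ, N ≤ n → mul n a b = 0

attribute [instance] ConfAlg.ag ConfAlg.mo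

variable {𝕜 : Type} [Field 𝕜]

/-- Divided power of the derivation: `D^{(s)} = D^s / s!`. -/
noncomputable def ConfAlg.dpow (C : ConfAlg 𝕜) (s : ℕ) (a : C.A) : C.A :=
  (s.factorial : 𝕜)⁻¹ • (C.D ^ s) a

/-- Conformal associativity. -/
def ConfAlg.IsAssoc (C : ConfAlg 𝕜) : Prop :=
  ∀ (a b c : C.A) (m n : ℕ),
    C.mul n (C.mul m a b) c =
      ∑ s ∈ Finset.range (m + 1), ((-1 : 𝕜) ^ s * (m.choose s : 𝕜)) •
        C.mul (m - s) a (C.mul (n + s) b c)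

/-- Conformal Jacobi identity together with quasi-symmetry. -/
def ConfAlg.IsLie (C : ConfAlg 𝕜) : Prop :=
  (∀ (a b c : C.A) (m n : ℕ),
    C.mul n (C.mul m a b) c =
      ∑ s ∈ Finset.range (m + 1), ((-1 : 𝕜) ^ s * (m.choose s : 𝕜)) •
        (C.mul (m - s) a (C.mul (n + s) b c) - C.mul (n + s) b (C.mul (m - s) a c))) ∧
  (∀ (a b : C.A) (n N : ℕ), (∀ s : ℕ, N ≤ s → C.mul (n + s) b a = 0) →
    C.mul n a b =
      -∑ s ∈ Finset.range N, ((-1 : 𝕜) ^ (s + n)) • C.dpow s (C.mul (n + s) b a))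

/-- Monomials in a family `f` with weights `wt`; `IsMon C f wt w v` means `w`
is a monomial (arbitrary placement of parentheses) of weight `v`. -/
inductive ConfAlg.IsMon (C : ConfAlg 𝕜) {I : Type} (f : I → C.A) (wt : I → ℕ) : C.A → ℕ → Prop
  | base (i : I) : ConfAlg.IsMon C f wt (f i) (wt i)
  | mul (n : ℕ) {a b : C.A} {wa wb : ℕ} :
      ConfAlg.IsMon C f wt a wa → ConfAlg.IsMon C f wt b wb →
      ConfAlg.IsMon C f wt (C.mul n a b) (wa + wb + n)

/-- `G` generates `C`. -/
def ConfAlg.Generates (C : ConfAlg 𝕜) (G : Set C.A) : Prop :=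
  ∀ p : Submodule 𝕜 C.A, G ⊆ ↑p → (∀ a ∈ p, C.D a ∈ p) →
    (∀ (n : ℕ) (a b : C.A), a ∈ p → b ∈ p → C.mul n a b ∈ p) → ∀ x : C.A, x ∈ p

/-- The filtration `𝔏'_i`. -/
def ConfAlg.Lp (C : ConfAlg 𝕜) {I : Type} (f : I → C.A) (wt : I → ℕ) (i : ℤ) :
    Submodule 𝕜 C.A :=
  Submodule.span 𝕜 {x : C.A | ∃ (m : ℕ) (w : C.A) (v : ℕ),
    C.IsMon f wt w v ∧ x = (C.D ^ m) w ∧ i + m ≤ (v : ℤ)}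

/-- The filtration `𝔏_i`. -/
def ConfAlg.Lf (C : ConfAlg 𝕜) {I : Type} (f : I → C.A) (wt : I → ℕ) (i : ℤ) : Set C.A :=
  {a : C.A | ∃ n : ℕ, (C.D ^ n) a ∈ C.Lp f wt (i - n)}

/-!
Both inclusions reduce to spanning elements. `D` raises the exponent of `D^m w` by one, which
costs exactly one unit of filtration degree. For a product `(D^m w)[n](D^{m'} w')` of spanning
elements, the Leibniz rule moves every `D` from the right factor to the left one, and
`(D a)[n] b = -n • a[n-1] b` then turns `(D^m w)[n] w'` into a multiple of the monomial
`w[n-m] w'` of weight `wt w + wt w' + n - m` (or into `0` when `n < m`).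
-/

namespace ConfAlg

variable {C : ConfAlg 𝕜} {I : Type} {f : I → C.A} {wt : I → ℕ}

lemma mul_pow_D_left_eq_smul (C : ConfAlg 𝕜) (m n : ℕ) (a b : C.A) :
    ∃ c : 𝕜, C.mul n ((C.D ^ m) a) b = c • C.mul (n - m) a b ∧ (n < m → c = 0) := by
  induction m generalizing n with
  | zero => exact ⟨1, by simp, by omega⟩
  | succ m ih =>
    cases n with
    | zero =>
      refine ⟨0, ?_, fun _ => rfl⟩
      rw [pow_succ', Module.End.mul_apply, C.dmul_zero, zero_smul]
    | succ n =>
      obtain ⟨c, hc, hc0⟩ := ih n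
      refine ⟨(-(n + 1 : 𝕜)) * c, ?_, fun h => by rw [hc0 (by omega), mul_zero]⟩
      rw [pow_succ', Module.End.mul_apply, C.dmul_succ, hc, smul_smul, Nat.succ_sub_succ]

lemma pow_D_mem_Lp {w : C.A} {v m : ℕ} {i : ℤ} (hw : C.IsMon f wt w v) (h : i + m ≤ v) :
    (C.D ^ m) w ∈ C.Lp f wt i :=
  Submodule.subset_span ⟨m, w, v, hw, rfl, h⟩

lemma Lp_antitone (C : ConfAlg 𝕜) (f : I → C.A) (wt : I → ℕ) : Antitone (C.Lp f wt) := by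
  intro i i' h
  apply Submodule.span_mono
  rintro x ⟨m, w, v, hw, rfl, hv⟩
  exact ⟨m, w, v, hw, rfl, by omega⟩

lemma D_mem_Lp {i : ℤ} {x : C.A} (hx : x ∈ C.Lp f wt i) : C.D x ∈ C.Lp f wt (i - 1) := by
  have hmap : (C.Lp f wt i).map C.D ≤ C.Lp f wt (i - 1) := by
    rw [Lp, Submodule.map_span, Submodule.span_le]
    rintro _ ⟨_, ⟨m, w, v, hw, rfl, hv⟩, rfl⟩
    rw [← Module.End.mul_apply, ← pow_succ']
    exact pow_D_mem_Lp hw (by push_cast; omega)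
  exact hmap (Submodule.mem_map_of_mem hx)

lemma mul_pow_D_left_mem_Lp {a b : C.A} {va vb : ℕ} (ha : C.IsMon f wt a va)
    (hb : C.IsMon f wt b vb) (m n : ℕ) :
    C.mul n ((C.D ^ m) a) b ∈ C.Lp f wt ((va : ℤ) + vb + n - m) := by
  obtain ⟨c, hc, hc0⟩ := C.mul_pow_D_left_eq_smul m n a b
  rw [hc]
  rcases le_or_gt m n with hmn | hnm
  · refine Submodule.smul_mem _ _ (pow_D_mem_Lp (m := 0) (ha.mul (n - m) hb) ?_)
    push_cast [Nat.cast_sub hmn]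
    omega
  · rw [hc0 hnm, zero_smul]
    exact Submodule.zero_mem _

lemma mul_pow_D_mem_Lp {a b : C.A} {va vb : ℕ} (ha : C.IsMon f wt a va)
    (hb : C.IsMon f wt b vb) (m m' n : ℕ) :
    C.mul n ((C.D ^ m) a) ((C.D ^ m') b) ∈ C.Lp f wt ((va : ℤ) + vb + n - m - m') := by
  induction m' generalizing m with
  | zero => simpa using mul_pow_D_left_mem_Lp ha hb m n
  | succ m' ih =>
    have hleibniz : C.mul n ((C.D ^ m) a) ((C.D ^ (m' + 1)) b) =
        C.D (C.mul n ((C.D ^ m) a) ((C.D ^ m') b)) -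
          C.mul n ((C.D ^ (m + 1)) a) ((C.D ^ m') b) := by
      simp only [pow_succ', Module.End.mul_apply, C.leibniz]
      abel
    rw [hleibniz]
    exact Submodule.sub_mem _ (C.Lp_antitone f wt (by omega) (D_mem_Lp (ih m)))
      (C.Lp_antitone f wt (by omega) (ih (m + 1)))

lemma mul_mem_Lp {i j : ℤ} {x y : C.A} (n : ℕ) (hx : x ∈ C.Lp f wt i)
    (hy : y ∈ C.Lp f wt j) : C.mul n x y ∈ C.Lp f wt (i + j + n) := by
  have hmap₂ : Submodule.map₂ (C.mul n) (C.Lp f wt i) (C.Lp f wt j) ≤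
      C.Lp f wt (i + j + n) := by
    rw [Lp, Lp, Submodule.map₂_span_span, Submodule.span_le]
    rintro _ ⟨_, ⟨m, a, va, ha, rfl, hva⟩, _, ⟨m', b, vb, hb, rfl, hvb⟩, rfl⟩
    exact C.Lp_antitone f wt (by omega) (mul_pow_D_mem_Lp ha hb m m' n)
  exact hmap₂ (Submodule.apply_mem_map₂ _ hx hy)

end ConfAlg

theorem filtration_Lp_mul_and_D_general
    (C : ConfAlg 𝕜) (G : Set C.A) (wt : ↥G → ℕ) :
    (∀ (i j : ℤ) (n : ℕ) (x y : C.A),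
        x ∈ C.Lp (Subtype.val : ↥G → C.A) wt i →
        y ∈ C.Lp (Subtype.val : ↥G → C.A) wt j →
        C.mul n x y ∈ C.Lp (Subtype.val : ↥G → C.A) wt (i + j + n)) ∧
    (∀ (i : ℤ) (x : C.A), x ∈ C.Lp (Subtype.val : ↥G → C.A) wt i →
        C.D x ∈ C.Lp (Subtype.val : ↥G → C.A) wt (i - 1)) :=
  ⟨fun _ _ n _ _ hx hy => ConfAlg.mul_mem_Lp n hx hy, fun _ _ hx => ConfAlg.D_mem_Lp hx⟩

/-- `𝔏'_i [n] 𝔏'_j ⊆ 𝔏'_{i+j+n}` and `D 𝔏'_i ⊆ 𝔏'_{i-1}`. -/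
theorem filtration_Lp_mul_and_D
    [CharZero 𝕜] (C : ConfAlg 𝕜) (hLie : C.IsLie) (G : Set C.A) (wt : ↥G → ℕ)
    (hgen : C.Generates G) :
    (∀ (i j : ℤ) (n : ℕ) (x y : C.A),
        x ∈ C.Lp (Subtype.val : ↥G → C.A) wt i →
        y ∈ C.Lp (Subtype.val : ↥G → C.A) wt j →
        C.mul n x y ∈ C.Lp (Subtype.val : ↥G → C.A) wt (i + j + n)) ∧
    (∀ (i : ℤ) (x : C.A), x ∈ C.Lp (Subtype.val : ↥G → C.A) wt i →
        C.D x ∈ C.Lp (Subtype.val : ↥G → C.A) wt (i - 1)) :=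
  filtration_Lp_mul_and_D_general C G wt
end

section
/- Let 𝔘 be a preconformal algebra over a field k of characteristic zero, let S ⊆ 𝔘 be a subset with a function d : S → ℤ, and for i ∈ ℤ let 𝔘_i be the k-span of all elements D^m w, where m ∈ ℕ and w = a_1(m_1)⋯a_{l−1}(m_{l−1})a_l is a monomial in S (arbitrary placement of parentheses, a_j ∈ S, m_j ∈ ℕ) with d(a_1)+⋯+d(a_l)+m_1+⋯+m_{l−1} − m ≥ i. Then for all i, j ∈ ℤ and n ∈ ℕ one has 𝔘_i (n) 𝔘_j ⊆ 𝔘_{i+j+n}, and D𝔘_i ⊆ 𝔘_{i−1}. -/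
open Finset

/-- A (bundled) preconformal algebra over a field `𝕜`: only the axiom (C2) is assumed,
no finiteness axiom (C1). -/
structure PreConfAlg (𝕜 : Type) [Field 𝕜] where
  A : Type
  [ag : AddCommGroup A]
  [mo : Module 𝕜 A]
  mul : ℕ → A →ₗ[𝕜] A →ₗ[𝕜] A
  D : A →ₗ[𝕜] A
  dmul_zero : ∀ a b : A, mul 0 (D a) b = 0
  dmul_succ : ∀ (n : ℕ) (a b : A), mul (n + 1) (D a) b = (-(n + 1 : 𝕜)) • mul n a b
  leibniz : ∀ (n : ℕ) (a b : A), D (mul n a b) = mul n (D a) b + mul n a (D b)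

attribute [instance] PreConfAlg.ag PreConfAlg.mo

variable {𝕜 : Type} [Field 𝕜]

/-- Divided power of the derivation: `D^{(s)} = D^s / s!`. -/
noncomputable def PreConfAlg.dpow (C : PreConfAlg 𝕜) (s : ℕ) (a : C.A) : C.A :=
  (s.factorial : 𝕜)⁻¹ • (C.D ^ s) a

/-- Monomials in a subset `S`, with the value `d(a_1)+⋯+d(a_l)+m_1+⋯+m_{l-1}`. -/
inductive PreConfAlg.IsMonV (C : PreConfAlg 𝕜) (S : Set C.A) (d : C.A → ℤ) : C.A → ℤ → Prop
  | base (a : C.A) : a ∈ S → PreConfAlg.IsMonV C S d a (d a)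
  | mul (n : ℕ) {a b : C.A} {va vb : ℤ} :
      PreConfAlg.IsMonV C S d a va → PreConfAlg.IsMonV C S d b vb →
      PreConfAlg.IsMonV C S d (C.mul n a b) (va + vb + n)

/-- The filtration `𝔘_i`. -/
def PreConfAlg.Uf (C : PreConfAlg 𝕜) (S : Set C.A) (d : C.A → ℤ) (i : ℤ) :
    Submodule 𝕜 C.A :=
  Submodule.span 𝕜 {x : C.A | ∃ (m : ℕ) (w : C.A) (v : ℤ),
    C.IsMonV S d w v ∧ x = (C.D ^ m) w ∧ i ≤ v - m}

/-! `𝔘_i` is spanned by the elements `D^m w` with `w` a monomial of value at least `i + m`, so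
`D` lowers the degree by one on generators, and by bilinearity it suffices to treat a product
`(D^m w)(n)(D^{m'} w')` of two generators. Leibniz' rule `a(n)(Db) = D(a(n)b) - (Da)(n)b`
moves the derivations off the right factor, and (C2), `(Da)(n)b = -n a(n-1)b`, removes them
from the left one without changing the degree, until a product `w(n)w'` of monomials is left. -/

namespace PreConfAlg

variable {C : PreConfAlg 𝕜} {S : Set C.A} {d : C.A → ℤ}

lemma Uf_antitone : Antitone (C.Uf S d) := by
  intro i i' h
  apply Submodule.span_mono
  rintro x ⟨m, w, v, hw, rfl, hv⟩
  exact ⟨m, w, v, hw, rfl, h.trans hv⟩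

lemma D_pow_mem_Uf {w : C.A} {v : ℤ} (hw : C.IsMonV S d w v) (m : ℕ) :
    (C.D ^ m) w ∈ C.Uf S d (v - m) :=
  Submodule.subset_span ⟨m, w, v, hw, rfl, le_rfl⟩

lemma D_pow_succ_apply (m : ℕ) (a : C.A) : (C.D ^ (m + 1)) a = C.D ((C.D ^ m) a) := by
  rw [pow_succ', Module.End.mul_apply]

lemma D_mem_Uf {i : ℤ} {x : C.A} (hx : x ∈ C.Uf S d i) : C.D x ∈ C.Uf S d (i - 1) := by
  suffices (C.Uf S d i).map C.D ≤ C.Uf S d (i - 1) from this ⟨x, hx, rfl⟩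
  rw [Uf, Submodule.map_span_le]
  rintro _ ⟨m, w, v, hw, rfl, hv⟩
  rw [← D_pow_succ_apply]
  exact Uf_antitone (by push_cast; omega) (D_pow_mem_Uf hw (m + 1))

lemma mul_D_right (n : ℕ) (a b : C.A) :
    C.mul n a (C.D b) = C.D (C.mul n a b) - C.mul n (C.D a) b := by
  rw [C.leibniz]
  abel

lemma mul_D_pow_left_mem_Uf {w w' : C.A} {v v' : ℤ} (hw : C.IsMonV S d w v)
    (hw' : C.IsMonV S d w' v') (m n : ℕ) :
    C.mul n ((C.D ^ m) w) w' ∈ C.Uf S d (v - m + v' + n) := by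
  induction m generalizing n with
  | zero =>
    simpa [add_right_comm] using D_pow_mem_Uf (IsMonV.mul n hw hw') 0
  | succ m ih =>
    rw [D_pow_succ_apply]
    cases n with
    | zero => simp [C.dmul_zero]
    | succ n =>
      rw [C.dmul_succ]
      exact Submodule.smul_mem _ _ (Uf_antitone (by push_cast; omega) (ih n))

lemma mul_D_pow_mem_Uf {w w' : C.A} {v v' : ℤ} (hw : C.IsMonV S d w v)
    (hw' : C.IsMonV S d w' v') (m m' n : ℕ) :
    C.mul n ((C.D ^ m) w) ((C.D ^ m') w') ∈ C.Uf S d (v - m + (v' - m') + n) := by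
  induction m' generalizing m with
  | zero => simpa using mul_D_pow_left_mem_Uf hw hw' m n
  | succ m' ih =>
    rw [D_pow_succ_apply, mul_D_right, ← D_pow_succ_apply]
    exact sub_mem (Uf_antitone (by push_cast; omega) (D_mem_Uf (ih m)))
      (Uf_antitone (by push_cast; omega) (ih (m + 1)))

lemma mul_mem_Uf {i j : ℤ} {n : ℕ} {x y : C.A} (hx : x ∈ C.Uf S d i) (hy : y ∈ C.Uf S d j) :
    C.mul n x y ∈ C.Uf S d (i + j + n) := by
  suffices Submodule.map₂ (C.mul n) (C.Uf S d i) (C.Uf S d j) ≤ C.Uf S d (i + j + n) from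
    this (Submodule.apply_mem_map₂ _ hx hy)
  rw [Uf, Uf, Submodule.map₂_span_span, Submodule.span_le]
  rintro _ ⟨_, ⟨m, w, v, hw, rfl, hv⟩, _, ⟨m', w', v', hw', rfl, hv'⟩, rfl⟩
  exact Uf_antitone (by omega) (mul_D_pow_mem_Uf hw hw' m m' n)

end PreConfAlg

theorem filtration_Uf_mul_and_D_general
    (C : PreConfAlg 𝕜) (S : Set C.A) (d : C.A → ℤ) :
    (∀ (i j : ℤ) (n : ℕ) (x y : C.A),
        x ∈ C.Uf S d i → y ∈ C.Uf S d j → C.mul n x y ∈ C.Uf S d (i + j + n)) ∧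
    (∀ (i : ℤ) (x : C.A), x ∈ C.Uf S d i → C.D x ∈ C.Uf S d (i - 1)) :=
  ⟨fun _ _ _ _ _ hx hy => PreConfAlg.mul_mem_Uf hx hy, fun _ _ hx => PreConfAlg.D_mem_Uf hx⟩

/-- `𝔘_i (n) 𝔘_j ⊆ 𝔘_{i+j+n}` and `D𝔘_i ⊆ 𝔘_{i-1}`. -/
theorem filtration_Uf_mul_and_D
    [CharZero 𝕜] (C : PreConfAlg 𝕜) (S : Set C.A) (d : C.A → ℤ) :
    (∀ (i j : ℤ) (n : ℕ) (x y : C.A),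
        x ∈ C.Uf S d i → y ∈ C.Uf S d j → C.mul n x y ∈ C.Uf S d (i + j + n)) ∧
    (∀ (i : ℤ) (x : C.A), x ∈ C.Uf S d i → C.D x ∈ C.Uf S d (i - 1)) :=
  filtration_Uf_mul_and_D_general C S d
end

section
/- Let A be an associative k-algebra and let α, β, γ : ℤ → A be coefficient families of formal series. Then for all m, n ∈ ℕ the conformal associativity identity holds: (α(m)β)(n)γ = Σ_{s=0}^{m} (−1)^s·binom(m,s)·α(m−s)(β(n+s)γ) as functions ℤ → A, i.e., for every k ∈ ℤ, Σ_{i=0}^{m} Σ_{j=0}^{n} (−1)^{i+j}·binom(m,i)·binom(n,j)·α(m−i)·β(n+i−j)·γ(k+j) = Σ_{s=0}^{m} Σ_{i=0}^{m−s} Σ_{j=0}^{n+s} (−1)^{i+j+s}·binom(m,s)·binom(m−s,i)·binom(n+s,j)·α(m−s−i)·β(n+s−j)·γ(k+i+j). -/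
open Finset

/-- Alternating Vandermonde / iterated finite difference identity for binomial
coefficients: the `t`-th finite difference of `x ↦ C(x, kk)` evaluated at `n`. -/
lemma aux_alternating_choose : ∀ (t : ℕ), ∀ (n kk : ℕ),
    ∑ s ∈ Finset.range (t+1), (-1:ℤ)^s * (t.choose s : ℤ) * ((n+s).choose kk : ℤ)
      = (-1:ℤ)^t * (if t ≤ kk then (n.choose (kk-t) : ℤ) else 0) := by
  intro t
  induction t with
  | zero => intro n kk; simp
  | succ t ih =>
    intro n kk
    have step : ∑ s ∈ Finset.range (t+1+1), (-1:ℤ)^s * ((t+1).choose s : ℤ) * ((n+s).choose kk : ℤ)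
        = (∑ s ∈ Finset.range (t+1), (-1:ℤ)^s * (t.choose s : ℤ) * ((n+s).choose kk : ℤ))
          - ∑ s ∈ Finset.range (t+1), (-1:ℤ)^s * (t.choose s : ℤ) * (((n+1)+s).choose kk : ℤ) := by
      rw [Finset.sum_range_succ' (fun s => (-1:ℤ)^s * ((t+1).choose s : ℤ) * ((n+s).choose kk : ℤ))]
      have expand : ∀ s ∈ Finset.range (t+1),
          (-1:ℤ)^(s+1) * ((t+1).choose (s+1) : ℤ) * ((n+(s+1)).choose kk : ℤ)
          = -((-1:ℤ)^s * (t.choose s : ℤ) * (((n+1)+s).choose kk : ℤ))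
            + (-1:ℤ)^(s+1) * (t.choose (s+1) : ℤ) * ((n+(s+1)).choose kk : ℤ) := by
        intro s _
        rw [Nat.choose_succ_succ]
        push_cast
        have : n + (s+1) = (n+1) + s := by ring
        rw [this]
        ring
      rw [Finset.sum_congr rfl expand, Finset.sum_add_distrib, Finset.sum_neg_distrib]
      have T : (∑ s ∈ Finset.range (t+1), (-1:ℤ)^(s+1) * (t.choose (s+1) : ℤ) * ((n+(s+1)).choose kk : ℤ))
          + (-1:ℤ)^0 * (t.choose 0 : ℤ) * ((n+0).choose kk : ℤ)
          = ∑ s ∈ Finset.range (t+1), (-1:ℤ)^s * (t.choose s : ℤ) * ((n+s).choose kk : ℤ) := by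
        rw [← Finset.sum_range_succ' (fun s => (-1:ℤ)^s * (t.choose s : ℤ) * ((n+s).choose kk : ℤ)),
          Finset.sum_range_succ]
        simp [Nat.choose_eq_zero_of_lt (show t < t+1 by omega)]
      simp only [pow_zero, Nat.choose_zero_right, Nat.cast_one, one_mul, Nat.add_zero] at T ⊢
      linarith [T]
    rw [step, ih n kk, ih (n+1) kk]
    by_cases h1 : t + 1 ≤ kk
    · have h0 : t ≤ kk := by omega
      rw [if_pos h1, if_pos h0, if_pos h0]
      have hk : kk - t = (kk - (t+1)) + 1 := by omega
      rw [hk, Nat.choose_succ_succ]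
      push_cast
      have : kk - (t+1) = kk - t - 1 := by omega
      rw [this]
      ring
    · rw [if_neg h1]
      by_cases h0 : t ≤ kk
      · have : kk = t := by omega
        subst this
        simp
      · rw [if_neg h0, if_neg h0]; ring

/-- Reindexing a triangular double sum by the total `t = s + i`. -/
lemma aux_triangle_reindex {M : Type*} [AddCommMonoid M] (m : ℕ) (f : ℕ → ℕ → M) :
    ∑ s ∈ Finset.range (m+1), ∑ i ∈ Finset.range (m-s+1), f s i
      = ∑ t ∈ Finset.range (m+1), ∑ s ∈ Finset.range (t+1), f s (t-s) := by
  rw [Finset.sum_sigma', Finset.sum_sigma']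
  refine Finset.sum_nbij' (fun x => (⟨x.1 + x.2, x.1⟩ : (_ : ℕ) × ℕ))
    (fun x => (⟨x.2, x.1 - x.2⟩ : (_ : ℕ) × ℕ)) ?_ ?_ ?_ ?_ ?_
  · rintro ⟨a, b⟩ h
    simp only [Finset.mem_sigma, Finset.mem_range] at h ⊢
    omega
  · rintro ⟨a, b⟩ h
    simp only [Finset.mem_sigma, Finset.mem_range] at h ⊢
    omega
  · rintro ⟨a, b⟩ h
    simp only [Nat.add_sub_cancel_left]
  · rintro ⟨a, b⟩ h
    simp only [Finset.mem_sigma, Finset.mem_range] at h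
    have : b + (a - b) = a := by omega
    simp only [this]
  · rintro ⟨a, b⟩ h
    simp only [Nat.add_sub_cancel_left]

/-- Conformal associativity of the `n`-th products of formal series with
coefficients in an associative (not necessarily unital) `k`-algebra `A`, written out on the
`K`-th coefficient: the `K`-th coefficient of `(α(m)β)(n)γ` equals that of
`Σ_{s=0}^m (-1)^s binom(m,s) α(m-s)(β(n+s)γ)`. -/
theorem coefficient_conformal_associativity
    {k A : Type} [Field k] [CharZero k] [NonUnitalRing A] [Module k A]
    (α β γ : ℤ → A) (m n : ℕ) (K : ℤ) :
    ∑ i ∈ Finset.range (m + 1), ∑ j ∈ Finset.range (n + 1),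
      ((-1 : ℤ) ^ (i + j) * (m.choose i : ℤ) * (n.choose j : ℤ)) •
        (α ((m : ℤ) - i) * β ((n : ℤ) + i - j) * γ (K + j)) =
    ∑ s ∈ Finset.range (m + 1), ∑ i ∈ Finset.range (m - s + 1),
      ∑ j ∈ Finset.range (n + s + 1),
        ((-1 : ℤ) ^ (i + j + s) * (m.choose s : ℤ) * ((m - s).choose i : ℤ) *
            ((n + s).choose j : ℤ)) •
          (α ((m : ℤ) - s - i) * β ((n : ℤ) + s - j) * γ (K + i + j)) := by
  symm
  calc
    ∑ s ∈ Finset.range (m + 1), ∑ i ∈ Finset.range (m - s + 1),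
      ∑ j ∈ Finset.range (n + s + 1),
        ((-1 : ℤ) ^ (i + j + s) * (m.choose s : ℤ) * ((m - s).choose i : ℤ) *
            ((n + s).choose j : ℤ)) •
          (α ((m : ℤ) - s - i) * β ((n : ℤ) + s - j) * γ (K + i + j))
      = ∑ t ∈ Finset.range (m + 1), ∑ s ∈ Finset.range (t + 1),
          ∑ j ∈ Finset.range (n + s + 1),
            ((-1 : ℤ) ^ ((t-s) + j + s) * (m.choose s : ℤ) * ((m - s).choose (t-s) : ℤ) *
                ((n + s).choose j : ℤ)) •
              (α ((m : ℤ) - s - ((t-s : ℕ) : ℤ)) * β ((n : ℤ) + s - j) * γ (K + ((t-s : ℕ) : ℤ) + j)) :=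
        aux_triangle_reindex m _
    _ = ∑ t ∈ Finset.range (m + 1), ∑ s ∈ Finset.range (t + 1),
          ∑ j' ∈ Finset.range (n + t + 1),
            ((-1 : ℤ) ^ (j' + s) * (m.choose t : ℤ) * (t.choose s : ℤ) *
                ((n + s).choose (n + t - j') : ℤ)) •
              (α ((m : ℤ) - t) * β ((n : ℤ) + t - j') * γ (K + j')) := by
        refine Finset.sum_congr rfl fun t ht => Finset.sum_congr rfl fun s hs => ?_
        rw [Finset.mem_range] at ht hs
        have hst : s ≤ t := by omega
        have htm : t ≤ m := by omega
        -- restrict the right-hand sum to `Ico (t-s) (n+t+1)`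
        have hz : ∀ j' ∈ Finset.range (n + t + 1), j' ∉ Finset.Ico (t-s) (n+t+1) →
            ((-1 : ℤ) ^ (j' + s) * (m.choose t : ℤ) * (t.choose s : ℤ) *
                ((n + s).choose (n + t - j') : ℤ)) •
              (α ((m : ℤ) - t) * β ((n : ℤ) + t - j') * γ (K + j')) = 0 := by
          intro j' hj' hj''
          rw [Finset.mem_range] at hj'
          rw [Finset.mem_Ico] at hj''
          have hlt : n + s < n + t - j' := by omega
          rw [Nat.choose_eq_zero_of_lt hlt]
          simp
        have hsub : Finset.Ico (t-s) (n+t+1) ⊆ Finset.range (n+t+1) := by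
          intro x hx
          rw [Finset.mem_Ico] at hx
          rw [Finset.mem_range]
          omega
        rw [← Finset.sum_subset hsub hz, Finset.sum_Ico_eq_sum_range]
        have hcard : n + t + 1 - (t - s) = n + s + 1 := by omega
        rw [hcard]
        refine Finset.sum_congr rfl fun j hj => ?_
        rw [Finset.mem_range] at hj
        have hjns : j ≤ n + s := by omega
        have e1 : n + t - (t - s + j) = n + s - j := by omega
        have e3 : ((m : ℤ) - t) = (m : ℤ) - s - ((t-s : ℕ) : ℤ) := by
          rw [Nat.cast_sub hst]; ring
        have e4 : ((n : ℤ) + t - ((t - s + j : ℕ) : ℤ)) = (n : ℤ) + s - j := by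
          rw [Nat.cast_add, Nat.cast_sub hst]; ring
        have e5 : (K + ((t - s + j : ℕ) : ℤ)) = K + ((t-s : ℕ) : ℤ) + j := by
          rw [Nat.cast_add]; ring
        rw [e1, Nat.choose_symm hjns, e3, e4, e5]
        congr 1
        have e2 : ((m.choose t : ℤ)) * (t.choose s : ℤ)
            = (m.choose s : ℤ) * ((m-s).choose (t-s) : ℤ) := by
          exact_mod_cast Nat.choose_mul (n := m) hst
        linear_combination (-((-1:ℤ)^(t - s + j + s)) * ((n+s).choose j : ℤ)) * e2
    _ = ∑ t ∈ Finset.range (m + 1), ∑ j' ∈ Finset.range (n + t + 1),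
          ∑ s ∈ Finset.range (t + 1),
            ((-1 : ℤ) ^ (j' + s) * (m.choose t : ℤ) * (t.choose s : ℤ) *
                ((n + s).choose (n + t - j') : ℤ)) •
              (α ((m : ℤ) - t) * β ((n : ℤ) + t - j') * γ (K + j')) :=
        Finset.sum_congr rfl fun t _ => Finset.sum_comm
    _ = ∑ t ∈ Finset.range (m + 1), ∑ j' ∈ Finset.range (n + t + 1),
          ((-1:ℤ)^t * (if t ≤ n + t - j' then (n.choose (n + t - j' - t) : ℤ) else 0)
              * ((-1:ℤ)^j' * (m.choose t : ℤ))) •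
            (α ((m : ℤ) - t) * β ((n : ℤ) + t - j') * γ (K + j')) := by
        refine Finset.sum_congr rfl fun t _ => Finset.sum_congr rfl fun j' _ => ?_
        have hterm : ∀ s ∈ Finset.range (t+1),
            ((-1 : ℤ) ^ (j' + s) * (m.choose t : ℤ) * (t.choose s : ℤ) *
                ((n + s).choose (n + t - j') : ℤ)) •
              (α ((m : ℤ) - t) * β ((n : ℤ) + t - j') * γ (K + j'))
            = ((-1:ℤ)^s * (t.choose s : ℤ) * ((n + s).choose (n + t - j') : ℤ)) •
                ((((-1:ℤ)^j' * (m.choose t : ℤ))) •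
                  (α ((m : ℤ) - t) * β ((n : ℤ) + t - j') * γ (K + j'))) := by
          intro s _
          rw [← mul_smul]
          congr 1
          ring
        rw [Finset.sum_congr rfl hterm, ← Finset.sum_smul,
          aux_alternating_choose t n (n + t - j'), ← mul_smul]
    _ = ∑ i ∈ Finset.range (m + 1), ∑ j ∈ Finset.range (n + 1),
          ((-1 : ℤ) ^ (i + j) * (m.choose i : ℤ) * (n.choose j : ℤ)) •
            (α ((m : ℤ) - i) * β ((n : ℤ) + i - j) * γ (K + j)) := by
        refine Finset.sum_congr rfl fun t ht => ?_
        have hsub : Finset.range (n+1) ⊆ Finset.range (n+t+1) := by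
          intro x hx
          rw [Finset.mem_range] at hx ⊢
          omega
        have hz : ∀ j' ∈ Finset.range (n+t+1), j' ∉ Finset.range (n+1) →
            ((-1:ℤ)^t * (if t ≤ n + t - j' then (n.choose (n + t - j' - t) : ℤ) else 0)
                * ((-1:ℤ)^j' * (m.choose t : ℤ))) •
              (α ((m : ℤ) - t) * β ((n : ℤ) + t - j') * γ (K + j')) = 0 := by
          intro j' hj' hj''
          rw [Finset.mem_range] at hj' hj''
          have : ¬ (t ≤ n + t - j') := by omega
          rw [if_neg this]
          simp
        rw [← Finset.sum_subset hsub hz]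
        refine Finset.sum_congr rfl fun j hj => ?_
        rw [Finset.mem_range] at hj
        have h1 : t ≤ n + t - j := by omega
        have h2 : n + t - j - t = n - j := by omega
        have h3 : j ≤ n := by omega
        rw [if_pos h1, h2, Nat.choose_symm h3]
        congr 1
        ring
end

section
/- For all natural numbers m, n, i, j, the following binomial identity holds: Σ_{s=0}^{i} (−1)^{s+j}·binom(m,s)·binom(m−s,i−s)·binom(n+s,j−i+s) = (−1)^{i+j}·binom(m,i)·binom(n,j), where a binomial coefficient binom(a,b) is interpreted as 0 whenever b < 0 or b > a. -/
open Finset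

/-- Binomial coefficient on integers, with the convention `ichoose a b = 0`
whenever `b < 0` or `b > a`. -/
def ichoose (a b : ℤ) : ℤ :=
  if 0 ≤ b ∧ b ≤ a then (a.toNat.choose b.toNat : ℤ) else 0

lemma ichoose_natCast (a b : ℕ) : ichoose (a : ℤ) (b : ℤ) = (a.choose b : ℤ) := by
  unfold ichoose
  by_cases h : (b : ℤ) ≤ (a : ℤ)
  · simp [h]
  · have hba : a < b := by exact_mod_cast not_le.mp h
    simp [h, Nat.choose_eq_zero_of_lt hba]

lemma ichoose_neg (a b : ℤ) (h : b < 0) : ichoose a b = 0 := by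
  unfold ichoose
  simp [not_le.mpr h]

lemma ichoose_pascal (n : ℕ) (j : ℤ) :
    ichoose ((n : ℤ) + 1) j = ichoose (n : ℤ) j + ichoose (n : ℤ) (j - 1) := by
  by_cases hj : 0 ≤ j
  · lift j to ℕ using hj
    cases j with
    | zero =>
      have h0 : ((0 : ℕ) : ℤ) - 1 < 0 := by norm_num
      rw [ichoose_neg _ _ h0]
      have : ((n : ℤ) + 1) = ((n + 1 : ℕ) : ℤ) := by push_cast; ring
      rw [this, ichoose_natCast, ichoose_natCast]
      simp
    | succ k =>
      have h1 : ((n : ℤ) + 1) = ((n + 1 : ℕ) : ℤ) := by push_cast; ring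
      have h2 : ((k + 1 : ℕ) : ℤ) - 1 = ((k : ℕ) : ℤ) := by push_cast; ring
      rw [h1, h2, ichoose_natCast, ichoose_natCast, ichoose_natCast]
      rw [Nat.choose_succ_succ]
      push_cast
      ring
  · push_neg at hj
    rw [ichoose_neg _ _ hj, ichoose_neg _ _ hj, ichoose_neg _ _ (by omega)]
    ring

lemma key_sum (i : ℕ) : ∀ (n : ℕ) (j : ℤ),
    ∑ t ∈ Finset.range (i + 1),
      (-1 : ℤ) ^ t * (i.choose t : ℤ) * ichoose ((n : ℤ) + i - t) (j - t)
    = ichoose (n : ℤ) j := by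
  induction i with
  | zero =>
    intro n j
    simp
  | succ i ih =>
    intro n j
    rw [Finset.sum_range_succ']
    have step : ∀ t ∈ Finset.range (i + 1),
        (-1 : ℤ) ^ (t + 1) * ((i + 1).choose (t + 1) : ℤ) *
          ichoose ((n : ℤ) + (i + 1 : ℕ) - (t + 1 : ℕ)) (j - (t + 1 : ℕ))
        = -((-1 : ℤ) ^ t * (i.choose t : ℤ) * ichoose ((n : ℤ) + i - t) ((j - 1) - t))
          + (-1 : ℤ) ^ (t + 1) * (i.choose (t + 1) : ℤ) *
            ichoose (((n + 1 : ℕ) : ℤ) + i - (t + 1 : ℕ)) (j - (t + 1 : ℕ)) := by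
      intro t ht
      rw [Nat.choose_succ_succ]
      have e1 : (n : ℤ) + (i + 1 : ℕ) - (t + 1 : ℕ) = (n : ℤ) + i - t := by
        push_cast; ring
      have e2 : ((n + 1 : ℕ) : ℤ) + i - (t + 1 : ℕ) = (n : ℤ) + i - t := by
        push_cast; ring
      have e3 : j - ((t + 1 : ℕ) : ℤ) = (j - 1) - t := by push_cast; ring
      rw [e1, e2, e3]
      push_cast
      ring
    rw [Finset.sum_congr rfl step, Finset.sum_add_distrib, Finset.sum_neg_distrib]
    rw [ih n (j - 1)]
    have last : (-1 : ℤ) ^ (i + 1) * (i.choose (i + 1) : ℤ) *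
        ichoose (((n + 1 : ℕ) : ℤ) + i - ((i + 1 : ℕ) : ℤ)) (j - ((i + 1 : ℕ) : ℤ)) = 0 := by
      simp [Nat.choose_eq_zero_of_lt (Nat.lt_succ_self i)]
    have shift : ∑ t ∈ Finset.range (i + 1),
        (-1 : ℤ) ^ (t + 1) * (i.choose (t + 1) : ℤ) *
          ichoose (((n + 1 : ℕ) : ℤ) + i - ((t + 1 : ℕ) : ℤ)) (j - ((t + 1 : ℕ) : ℤ))
        + (-1 : ℤ) ^ 0 * ((i + 1).choose 0 : ℤ) *
          ichoose ((n : ℤ) + (i + 1 : ℕ) - ((0 : ℕ) : ℤ)) (j - ((0 : ℕ) : ℤ))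
        = ∑ t ∈ Finset.range (i + 1),
            (-1 : ℤ) ^ t * (i.choose t : ℤ) *
              ichoose (((n + 1 : ℕ) : ℤ) + i - (t : ℤ)) (j - (t : ℤ)) := by
      rw [Finset.sum_range_succ, last]
      rw [Finset.sum_range_succ' (fun t => (-1 : ℤ) ^ t * (i.choose t : ℤ) *
        ichoose (((n + 1 : ℕ) : ℤ) + i - (t : ℤ)) (j - (t : ℤ))) i]
      have e0 : ((n + 1 : ℕ) : ℤ) + i - ((0 : ℕ) : ℤ) = (n : ℤ) + (i + 1 : ℕ) - ((0 : ℕ) : ℤ) := by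
        push_cast; ring
      rw [e0]
      simp only [Nat.choose_zero_right, pow_zero, Nat.cast_one, Nat.cast_zero]
      push_cast
      ring
    have h3 := ih (n + 1) j
    have h5 : ((n + 1 : ℕ) : ℤ) = (n : ℤ) + 1 := by push_cast; ring
    have h4 := ichoose_pascal n j
    rw [← h5] at h4
    linarith [shift, h3, h4]

lemma trinomial (m i s : ℕ) (h : s ≤ i) :
    ichoose (m : ℤ) (s : ℤ) * ichoose ((m : ℤ) - s) ((i : ℤ) - s)
      = ichoose (m : ℤ) (i : ℤ) * (i.choose s : ℤ) := by
  by_cases him : i ≤ m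
  · have hsm : s ≤ m := le_trans h him
    have e1 : (m : ℤ) - s = ((m - s : ℕ) : ℤ) := by
      omega
    have e2 : (i : ℤ) - s = ((i - s : ℕ) : ℤ) := by
      omega
    rw [e1, e2, ichoose_natCast, ichoose_natCast, ichoose_natCast]
    rw [← Nat.cast_mul, ← Nat.cast_mul, ← Nat.choose_mul h, Nat.mul_comm]
  · push_neg at him
    have him' : ichoose (m : ℤ) (i : ℤ) = 0 := by
      rw [ichoose_natCast, Nat.choose_eq_zero_of_lt him]; simp
    rw [him']
    by_cases hsm : s ≤ m
    · have e1 : (m : ℤ) - s = ((m - s : ℕ) : ℤ) := by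
        omega
      have e2 : (i : ℤ) - s = ((i - s : ℕ) : ℤ) := by
        omega
      rw [e1, e2, ichoose_natCast, ichoose_natCast,
        Nat.choose_eq_zero_of_lt (show m - s < i - s by omega)]
      simp
    · push_neg at hsm
      rw [ichoose_natCast, Nat.choose_eq_zero_of_lt hsm]
      simp

/-- The binomial identity
`Σ_{s=0}^{i} (-1)^{s+j} binom(m,s) binom(m-s,i-s) binom(n+s,j-i+s)
  = (-1)^{i+j} binom(m,i) binom(n,j)`. -/
theorem binomial_identity (m n i j : ℕ) :
    ∑ s ∈ Finset.range (i + 1),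
      (-1 : ℤ) ^ (s + j) * ichoose (m : ℤ) (s : ℤ) *
        ichoose ((m : ℤ) - s) ((i : ℤ) - s) * ichoose ((n : ℤ) + s) ((j : ℤ) - i + s) =
    (-1 : ℤ) ^ (i + j) * ichoose (m : ℤ) (i : ℤ) * ichoose (n : ℤ) (j : ℤ) := by
  have step1 : ∀ s ∈ Finset.range (i + 1),
      (-1 : ℤ) ^ (s + j) * ichoose (m : ℤ) (s : ℤ) *
        ichoose ((m : ℤ) - s) ((i : ℤ) - s) * ichoose ((n : ℤ) + s) ((j : ℤ) - i + s)
      = (-1 : ℤ) ^ (s + j) * (ichoose (m : ℤ) (i : ℤ) * (i.choose s : ℤ)) *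
          ichoose ((n : ℤ) + s) ((j : ℤ) - i + s) := by
    intro s hs
    rw [mul_assoc ((-1 : ℤ) ^ (s + j)), trinomial m i s (by simp at hs; omega), ← mul_assoc]
  rw [Finset.sum_congr rfl step1]
  rw [← Finset.sum_range_reflect]
  have step2 : ∀ t ∈ Finset.range (i + 1),
      (-1 : ℤ) ^ ((i + 1 - 1 - t) + j) *
          (ichoose (m : ℤ) (i : ℤ) * (i.choose (i + 1 - 1 - t) : ℤ)) *
          ichoose ((n : ℤ) + (i + 1 - 1 - t : ℕ)) ((j : ℤ) - i + (i + 1 - 1 - t : ℕ))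
      = ((-1 : ℤ) ^ (i + j) * ichoose (m : ℤ) (i : ℤ)) *
          ((-1 : ℤ) ^ t * (i.choose t : ℤ) * ichoose ((n : ℤ) + i - t) ((j : ℤ) - t)) := by
    intro t ht
    simp only [Finset.mem_range] at ht
    have hti : t ≤ i := by omega
    have e0 : i + 1 - 1 - t = i - t := by omega
    rw [e0]
    have e1 : ((i - t : ℕ) : ℤ) = (i : ℤ) - t := by
      omega
    have e2 : (n : ℤ) + ((i - t : ℕ) : ℤ) = (n : ℤ) + i - t := by rw [e1]; ring
    have e3 : (j : ℤ) - i + ((i - t : ℕ) : ℤ) = (j : ℤ) - t := by rw [e1]; ring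
    have e4 : (i.choose (i - t) : ℤ) = (i.choose t : ℤ) := by
      rw [Nat.choose_symm hti]
    have e5 : (-1 : ℤ) ^ ((i - t) + j) = (-1 : ℤ) ^ (i + j) * (-1 : ℤ) ^ t := by
      have h : i + j = (i - t) + j + t := by omega
      rw [h, pow_add ((-1 : ℤ)) ((i - t) + j) t, mul_assoc, ← mul_pow]
      norm_num
    rw [e2, e3, e4, e5]
    ring
  rw [Finset.sum_congr rfl step2, ← Finset.mul_sum, key_sum i n (j : ℤ)]
end

section
/- Let A be an associative k-algebra and let α, β, γ : ℤ → A be coefficient families of formal series. For s ∈ ℕ define the commutator s-product α⟨s⟩β : ℤ → A by (α⟨s⟩β)(p) = Σ_{t=0}^{s} (−1)^t·binom(s,t)·( α(s−t)·β(p+t) − β(p+t)·α(s−t) ). Then for all m, n ∈ ℕ: α(m)(β(n)γ) − β(n)(α(m)γ) = Σ_{s=0}^{m} binom(m,s)·(α⟨s⟩β)(m+n−s)γ, as functions ℤ → A. -/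
open Finset

/-- The `n`-th product of formal series (given by coefficient families):
`(α(n)β)(m) = Σ_{s=0}^n (-1)^s binom(n,s) α(n-s)·β(m+s)`. -/
def nprod {A : Type} [NonUnitalRing A] (α β : ℤ → A) (n : ℕ) : ℤ → A :=
  fun m => ∑ s ∈ Finset.range (n + 1),
    ((-1 : ℤ) ^ s * (n.choose s : ℤ)) • (α ((n : ℤ) - s) * β (m + s))

/-- The commutator `s`-product:
`(α⟨s⟩β)(p) = Σ_{t=0}^s (-1)^t binom(s,t) (α(s-t)·β(p+t) - β(p+t)·α(s-t))`. -/
def cprod {A : Type} [NonUnitalRing A] (α β : ℤ → A) (s : ℕ) : ℤ → A :=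
  fun p => ∑ t ∈ Finset.range (s + 1),
    ((-1 : ℤ) ^ t * (s.choose t : ℤ)) •
      (α ((s : ℤ) - t) * β (p + t) - β (p + t) * α ((s : ℤ) - t))


lemma key_id (M : ℕ) : ∀ (n u : ℕ),
    ∑ t ∈ Finset.range (M+1), (-1:ℤ)^t * (M.choose t) * ((M+n-t).choose u)
      = if M ≤ u then ((n.choose (u - M) : ℤ)) else 0 := by
  induction M with
  | zero =>
    intro n u
    simp
  | succ M ih =>
    intro n u
    rw [Finset.sum_range_succ' (fun t => (-1:ℤ)^t * ((M+1).choose t) * ((M+1+n-t).choose u))]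
    have h1 : ∀ t ∈ Finset.range (M+1),
        (-1:ℤ)^(t+1) * ((M+1).choose (t+1)) * ((M+1+n-(t+1)).choose u)
        = -((-1:ℤ)^t * (M.choose t) * ((M+n-t).choose u))
          + (-1:ℤ)^(t+1) * (M.choose (t+1)) * ((M+n-t).choose u) := by
      intro t ht
      have harg : M+1+n-(t+1) = M+n-t := by omega
      rw [harg, Nat.choose_succ_succ]
      push_cast
      ring
    rw [Finset.sum_congr rfl h1, Finset.sum_add_distrib]
    have hB : ∑ t ∈ Finset.range (M+1),
        (-1:ℤ)^(t+1) * (M.choose (t+1)) * ((M+n-t).choose u)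
        = (if M ≤ u then ((n+1).choose (u - M) : ℤ) else 0) - ((M+n+1).choose u) := by
      have e : ∀ t ∈ Finset.range (M+1),
          (-1:ℤ)^(t+1) * (M.choose (t+1)) * ((M+n-t).choose u)
          = (fun t' => (-1:ℤ)^t' * (M.choose t') * ((M+(n+1)-t').choose u)) (t+1) := by
        intro t ht
        simp only []
        congr 3
        omega
      rw [Finset.sum_congr rfl e]
      have := Finset.sum_range_succ' (fun t' => (-1:ℤ)^t' * (M.choose t') * ((M+(n+1)-t').choose u)) (M+1)
      have h2 : ∑ t' ∈ Finset.range (M+1+1),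
          (-1:ℤ)^t' * (M.choose t') * ((M+(n+1)-t').choose u)
          = ∑ t' ∈ Finset.range (M+1), (-1:ℤ)^t' * (M.choose t') * ((M+(n+1)-t').choose u) := by
        rw [Finset.sum_range_succ]
        simp [Nat.choose_eq_zero_of_lt (by omega : M < M+1)]
      rw [h2, ih (n+1) u] at this
      have h0 : ((-1:ℤ)^0 * (M.choose 0) * ((M+(n+1)-0).choose u)) = ((M+n+1).choose u : ℤ) := by
        simp [show M+(n+1)=M+n+1 from by omega]
      rw [h0] at this
      linarith [this]
    rw [Finset.sum_neg_distrib, hB, ih n u]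
    have h00 : (-1:ℤ)^0 * ((M+1).choose 0) * ((M+1+n-0).choose u) = ((M+n+1).choose u : ℤ) := by
      norm_num [show M+1+n = M+n+1 by omega]
    rw [h00]
    by_cases hMu : M + 1 ≤ u
    · have hM : M ≤ u := by omega
      simp only [hM, hMu, if_pos]
      have : u - M = (u - (M+1)) + 1 := by omega
      rw [this, Nat.choose_succ_succ]
      push_cast
      ring
    · by_cases hM : M ≤ u
      · have : u = M := by omega
        subst this
        simp [hM, hMu]
        ring
      · simp [hM, hMu]

lemma coefsum (m n a u : ℕ) (ha : a ≤ m) :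
    ∑ t ∈ range (m+1), ((m.choose (t+a):ℤ) * ((-1:ℤ)^u * ((m+n-(t+a)).choose u))
        * ((-1:ℤ)^t * ((t+a).choose t)))
      = (-1:ℤ)^u * (m.choose a) *
          (if m - a ≤ u then ((n.choose (u-(m-a))):ℤ) else 0) := by
  rw [← Finset.sum_subset (Finset.range_subset_range.mpr (by omega : m - a + 1 ≤ m + 1))]
  · have e : ∀ t ∈ range (m-a+1),
        ((m.choose (t+a):ℤ) * ((-1:ℤ)^u * ((m+n-(t+a)).choose u))
          * ((-1:ℤ)^t * ((t+a).choose t)))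
        = ((-1:ℤ)^u * (m.choose a)) * ((-1:ℤ)^t * ((m-a).choose t) * (((m-a)+n-t).choose u)) := by
      intro t ht
      simp only [Finset.mem_range] at ht
      have h1 : (t+a).choose t = (t+a).choose a := by
        rw [← Nat.choose_symm (by omega : a ≤ t+a), Nat.add_sub_cancel]
      have h2 : m.choose (t+a) * (t+a).choose a = m.choose a * (m-a).choose t := by
        rw [Nat.choose_mul (by omega : a ≤ t+a), Nat.add_sub_cancel]
      have h3 : m+n-(t+a) = (m-a)+n-t := by omega
      have h2' : ((m.choose (t+a) : ℤ)) * ((t+a).choose a) = (m.choose a : ℤ) * ((m-a).choose t) := by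
        exact_mod_cast congrArg (Nat.cast (R := ℤ)) h2
      rw [h1, h3]
      linear_combination ((-1:ℤ)^u * (-1:ℤ)^t * (((m-a)+n-t).choose u : ℤ)) * h2'
    rw [Finset.sum_congr rfl e, ← Finset.mul_sum, key_id]
  · intro t ht hnt
    simp only [Finset.mem_range] at ht hnt
    have : m.choose (t+a) = 0 := Nat.choose_eq_zero_of_lt (by omega)
    simp [this]

lemma lhs_expand {A : Type} [NonUnitalRing A] (α β γ : ℤ → A) (m n : ℕ) (p : ℤ) :
    nprod α (nprod β γ n) m p - nprod β (nprod α γ m) n p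
      = ∑ i ∈ range (m+1), ∑ j ∈ range (n+1),
          ((-1:ℤ)^(i+j) * (m.choose i) * (n.choose j)) •
            (α ((m:ℤ)-i) * (β ((n:ℤ)-j) * γ (p+i+j))
              - β ((n:ℤ)-j) * (α ((m:ℤ)-i) * γ (p+i+j))) := by
  simp only [nprod, Finset.mul_sum, mul_smul_comm, Finset.smul_sum, smul_smul]
  rw [Finset.sum_comm (s := range (n+1)) (t := range (m+1))]
  rw [← Finset.sum_sub_distrib]
  refine Finset.sum_congr rfl fun i hi => ?_
  rw [← Finset.sum_sub_distrib]
  refine Finset.sum_congr rfl fun j hj => ?_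
  have e1 : p + (j:ℤ) + i = p + i + j := by ring
  rw [e1, smul_sub]
  congr 1
  · congr 1
    rw [pow_add]; ring
  · congr 1
    rw [pow_add]; ring

def Dz {A : Type} [NonUnitalRing A] (α β γ : ℤ → A) (m n : ℕ) (p : ℤ) (a : ℤ) (u : ℕ) : A :=
  α a * (β ((m:ℤ)+n-a-u) * γ (p+u)) - β ((m:ℤ)+n-a-u) * (α a * γ (p+u))


lemma T_eq_mid {A : Type} [NonUnitalRing A] (α β γ : ℤ → A) (m n : ℕ) (p : ℤ) :
    ∑ a ∈ range (m+1), ∑ u ∈ range (m+n+1),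
        ((-1:ℤ)^u * (m.choose a) * (if m-a ≤ u then ((n.choose (u-(m-a))):ℤ) else 0)) •
          Dz α β γ m n p (a:ℤ) u
      = ∑ i ∈ range (m+1), ∑ j ∈ range (n+1),
          ((-1:ℤ)^(i+j) * (m.choose i) * (n.choose j)) •
            (α ((m:ℤ)-i) * (β ((n:ℤ)-j) * γ (p+i+j))
              - β ((n:ℤ)-j) * (α ((m:ℤ)-i) * γ (p+i+j))) := by
  have step1 : ∀ a ∈ range (m+1),
      ∑ u ∈ range (m+n+1),
        ((-1:ℤ)^u * (m.choose a) * (if m-a ≤ u then ((n.choose (u-(m-a))):ℤ) else 0)) •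
          Dz α β γ m n p (a:ℤ) u
      = ∑ j ∈ range (n+1),
          ((-1:ℤ)^((m-a)+j) * (m.choose a) * (n.choose j)) • Dz α β γ m n p (a:ℤ) ((m-a)+j) := by
    intro a ha
    simp only [Finset.mem_range] at ha
    rw [← Finset.sum_subset (show Ico (m-a) ((m-a)+(n+1)) ⊆ range (m+n+1) by
        intro x hx; simp only [Finset.mem_Ico] at hx; simp only [Finset.mem_range]; omega)]
    · rw [Finset.sum_Ico_eq_sum_range]
      rw [Nat.add_sub_cancel_left]
      refine Finset.sum_congr rfl fun j hj => ?_
      congr 1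
      rw [if_pos (by omega : m - a ≤ m - a + j), Nat.add_sub_cancel_left]
    · intro u hu hnu
      simp only [Finset.mem_range] at hu
      simp only [Finset.mem_Ico, not_and, not_lt] at hnu
      by_cases h : m - a ≤ u
      · have : n < u - (m-a) := by omega
        simp [Nat.choose_eq_zero_of_lt this, h]
      · simp [h]
  rw [Finset.sum_congr rfl step1]
  rw [← Finset.sum_range_reflect]
  refine Finset.sum_congr rfl fun i hi => ?_
  simp only [Finset.mem_range] at hi
  have hmi : m + 1 - 1 - i = m - i := by omega
  rw [hmi]
  refine Finset.sum_congr rfl fun j hj => ?_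
  simp only [Finset.mem_range] at hj
  have h1 : m - (m - i) = i := by omega
  have h2 : m.choose (m - i) = m.choose i := Nat.choose_symm (by omega)
  have h3 : Dz α β γ m n p ((m-i : ℕ) : ℤ) (i+j)
      = α ((m:ℤ)-i) * (β ((n:ℤ)-j) * γ (p+i+j))
        - β ((n:ℤ)-j) * (α ((m:ℤ)-i) * γ (p+i+j)) := by
    have hc : ((m-i : ℕ) : ℤ) = (m:ℤ) - i := by omega
    simp only [Dz, hc]
    push_cast
    rw [show (m:ℤ)+n-((m:ℤ)-i)-((i:ℤ)+j) = (n:ℤ)-j by ring,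
        show p+((i:ℤ)+j) = p+i+j by ring]
  rw [h1, h2, h3]

lemma rhs_eq_T {A : Type} [NonUnitalRing A] (α β γ : ℤ → A) (m n : ℕ) (p : ℤ) :
    ∑ s ∈ range (m+1), (m.choose s : ℤ) • nprod (cprod α β s) γ (m+n-s) p
      = ∑ a ∈ range (m+1), ∑ u ∈ range (m+n+1),
          ((-1:ℤ)^u * (m.choose a) * (if m-a ≤ u then ((n.choose (u-(m-a))):ℤ) else 0)) •
            Dz α β γ m n p (a:ℤ) u := by
  -- Step R0+R1+R2: expand each summand into the extended triple sum
  have step0 : ∀ s ∈ range (m+1),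
      (m.choose s : ℤ) • nprod (cprod α β s) γ (m+n-s) p
      = ∑ u ∈ range (m+n+1), ∑ t ∈ range (m+1),
          ((m.choose s : ℤ) * ((-1:ℤ)^u * ((m+n-s).choose u)) * ((-1:ℤ)^t * (s.choose t))) •
            Dz α β γ m n p ((s:ℤ)-t) u := by
    intro s hs
    simp only [Finset.mem_range] at hs
    have hc : ((m+n-s : ℕ) : ℤ) = (m:ℤ)+n-s := by omega
    simp only [nprod, cprod, Finset.sum_mul, smul_mul_assoc, Finset.smul_sum, smul_smul,
      sub_mul, mul_assoc, hc]
    -- now extend ranges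
    rw [← Finset.sum_subset (Finset.range_subset_range.mpr (by omega : m+n-s+1 ≤ m+n+1))]
    · refine Finset.sum_congr rfl fun u hu => ?_
      rw [← Finset.sum_subset (Finset.range_subset_range.mpr (by omega : s+1 ≤ m+1))]
      · refine Finset.sum_congr rfl fun t ht => ?_
        simp only [Dz]
        rw [show (m:ℤ)+n-((s:ℤ)-t)-u = (m:ℤ)+n-s-u+t by ring]
      · intro t ht hnt
        simp only [Finset.mem_range] at ht hnt
        simp [Nat.choose_eq_zero_of_lt (by omega : s < t)]
    · intro u hu hnu
      simp only [Finset.mem_range] at hu hnu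
      simp [Nat.choose_eq_zero_of_lt (by omega : m+n-s < u)]
  rw [Finset.sum_congr rfl step0]
  -- Step R3: reorder sums to u, t, s
  rw [Finset.sum_comm]
  have step3 : ∀ u ∈ range (m+n+1),
      ∑ s ∈ range (m+1), ∑ t ∈ range (m+1),
          ((m.choose s : ℤ) * ((-1:ℤ)^u * ((m+n-s).choose u)) * ((-1:ℤ)^t * (s.choose t))) •
            Dz α β γ m n p ((s:ℤ)-t) u
      = ∑ t ∈ range (m+1), ∑ a ∈ range (m+1),
          ((m.choose (t+a) : ℤ) * ((-1:ℤ)^u * ((m+n-(t+a)).choose u)) * ((-1:ℤ)^t * ((t+a).choose t))) •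
            Dz α β γ m n p (a:ℤ) u := by
    intro u hu
    rw [Finset.sum_comm]
    refine Finset.sum_congr rfl fun t ht => ?_
    simp only [Finset.mem_range] at ht
    -- Step R4: shift the s-sum
    rw [← Finset.sum_subset (show Ico t (m+1) ⊆ range (m+1) by
        intro x hx; simp only [Finset.mem_Ico] at hx; simp only [Finset.mem_range]; omega)]
    · rw [Finset.sum_Ico_eq_sum_range]
      rw [show m + 1 - t = (m - t) + 1 by omega]
      rw [← Finset.sum_subset (Finset.range_subset_range.mpr (by omega : m-t+1 ≤ m+1))]
      · refine Finset.sum_congr rfl fun a ha => ?_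
        rw [show ((t+a : ℕ) : ℤ) - (t:ℤ) = (a:ℤ) by push_cast; ring]
      · intro a ha hna
        simp only [Finset.mem_range] at ha hna
        simp [Nat.choose_eq_zero_of_lt (by omega : m < t+a)]
    · intro s hs hns
      simp only [Finset.mem_range] at hs
      simp only [Finset.mem_Ico, not_and, not_lt] at hns
      simp [Nat.choose_eq_zero_of_lt (by omega : s < t)]
  rw [Finset.sum_congr rfl step3]
  -- Step R5: reorder to a, u, t
  rw [Finset.sum_congr rfl (fun u (_ : u ∈ range (m+n+1)) => Finset.sum_comm ..), Finset.sum_comm]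
  have step5 : ∀ a ∈ range (m+1),
      ∑ u ∈ range (m+n+1), ∑ t ∈ range (m+1),
          ((m.choose (t+a) : ℤ) * ((-1:ℤ)^u * ((m+n-(t+a)).choose u)) * ((-1:ℤ)^t * ((t+a).choose t))) •
            Dz α β γ m n p (a:ℤ) u
      = ∑ u ∈ range (m+n+1),
          ((-1:ℤ)^u * (m.choose a) * (if m-a ≤ u then ((n.choose (u-(m-a))):ℤ) else 0)) •
            Dz α β γ m n p (a:ℤ) u := by
    intro a ha
    simp only [Finset.mem_range] at ha
    refine Finset.sum_congr rfl fun u hu => ?_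
    rw [← Finset.sum_smul, coefsum m n a u (by omega)]
  exact Finset.sum_congr rfl step5

/-- `α(m)(β(n)γ) - β(n)(α(m)γ) = Σ_{s=0}^m binom(m,s)·(α⟨s⟩β)(m+n-s)γ`
as functions `ℤ → A`. -/
theorem commutator_conformal_identity
    {k A : Type} [Field k] [CharZero k] [NonUnitalRing A] [Module k A]
    (α β γ : ℤ → A) (m n : ℕ) :
    ∀ p : ℤ,
      nprod α (nprod β γ n) m p - nprod β (nprod α γ m) n p =
        ∑ s ∈ Finset.range (m + 1), (m.choose s : ℤ) •
          nprod (cprod α β s) γ (m + n - s) p := by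
  intro p
  rw [lhs_expand, rhs_eq_T, T_eq_mid]
end

section
/- Let A be a k-algebra with an arbitrary bilinear product, and let α, β : ℤ → A be coefficient families of formal series that are local of order N ∈ ℕ. Then for every n ≥ N the product α(n)β is identically zero, i.e., (α(n)β)(m) = 0 for all m ∈ ℤ. -/
open Finset

/-!
Fix `c = m + n` and look at the diagonal `x ↦ α(x) β(c - x)`. The locality sum of order `N`
at `(m, n)` is exactly the `N`-th forward difference of this diagonal function at `n - N`, so
locality says that every diagonal has vanishing `N`-th difference, and then all higher
differences vanish as well. The `n`-th product at `m` is the `n`-th difference at `0`.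
-/

section

variable {G : Type*} [AddCommGroup G]

theorem sum_range_alternating_choose_smul_eq_fwdDiff_iter (F : ℤ → G) (N : ℕ) (a : ℤ) :
    ∑ s ∈ range (N + 1), ((-1 : ℤ) ^ s * N.choose s) • F (a - s) = (fwdDiff 1)^[N] F (a - N) := by
  rw [fwdDiff_iter_eq_sum_shift, ← sum_range_reflect]
  refine sum_congr rfl fun s hs => ?_
  have hsN : s ≤ N := Nat.lt_succ_iff.mp (mem_range.mp hs)
  rw [Nat.add_sub_cancel, Nat.choose_symm hsN, Nat.cast_sub hsN, nsmul_one]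
  congr 2
  ring

theorem sum_range_alternating_choose_smul_eq_fwdDiff_iter_diagonal (f : ℤ → ℤ → G) (N : ℕ)
    (m n : ℤ) :
    ∑ s ∈ range (N + 1), ((-1 : ℤ) ^ s * N.choose s) • f (n - s) (m + s) =
      (fwdDiff 1)^[N] (fun x => f x (m + n - x)) (n - N) := by
  rw [← sum_range_alternating_choose_smul_eq_fwdDiff_iter]
  refine sum_congr rfl fun s _ => ?_
  congr 2
  ring

theorem fwdDiff_iter_diagonal_eq_zero (f : ℤ → ℤ → G) (N : ℕ)
    (hloc : ∀ m n : ℤ, ∑ s ∈ range (N + 1), ((-1 : ℤ) ^ s * N.choose s) • f (n - s) (m + s) = 0)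
    (c : ℤ) : (fwdDiff 1)^[N] (fun x => f x (c - x)) = 0 := by
  funext y
  have h := hloc (c - (y + N)) (y + N)
  rwa [sum_range_alternating_choose_smul_eq_fwdDiff_iter_diagonal, sub_add_cancel,
    add_sub_cancel_right] at h

end

theorem nprod_eq_zero_of_local_general
    {k A : Type} [Field k] [AddCommGroup A] [Module k A]
    (mul : A →ₗ[k] A →ₗ[k] A) (α β : ℤ → A) (N : ℕ)
    (hloc : ∀ m n : ℤ, ∑ s ∈ Finset.range (N + 1),
      ((-1 : ℤ) ^ s * (N.choose s : ℤ)) • mul (α (n - s)) (β (m + s)) = 0)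
    (n : ℕ) (hn : N ≤ n) (m : ℤ) :
    ∑ s ∈ Finset.range (n + 1),
      ((-1 : ℤ) ^ s * (n.choose s : ℤ)) • mul (α ((n : ℤ) - s)) (β (m + s)) = 0 := by
  obtain ⟨d, rfl⟩ := Nat.exists_eq_add_of_le' hn
  rw [sum_range_alternating_choose_smul_eq_fwdDiff_iter_diagonal (fun a b => mul (α a) (β b)),
    sub_self, Function.iterate_add_apply,
    fwdDiff_iter_diagonal_eq_zero (fun a b => mul (α a) (β b)) N hloc]
  exact congrFun (Function.iterate_fixed (fwdDiff_const 1 0) d) _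

/-- If two coefficient families `α, β : ℤ → A` (with values in a `k`-algebra
`A` with an arbitrary bilinear product `mul`) are local of order `N`, then for every `n ≥ N`
the `n`-th product `α(n)β` vanishes identically. -/
theorem nprod_eq_zero_of_local
    {k A : Type} [Field k] [CharZero k] [AddCommGroup A] [Module k A]
    (mul : A →ₗ[k] A →ₗ[k] A) (α β : ℤ → A) (N : ℕ)
    (hloc : ∀ m n : ℤ, ∑ s ∈ Finset.range (N + 1),
      ((-1 : ℤ) ^ s * (N.choose s : ℤ)) • mul (α (n - s)) (β (m + s)) = 0)
    (n : ℕ) (hn : N ≤ n) (m : ℤ) :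
    ∑ s ∈ Finset.range (n + 1),
      ((-1 : ℤ) ^ s * (n.choose s : ℤ)) • mul (α ((n : ℤ) - s)) (β (m + s)) = 0 :=
  nprod_eq_zero_of_local_general mul α β N hloc n hn m
end

section
/- Let A be a k-algebra with an arbitrary bilinear product, and let 𝔄 be a subspace of the space of coefficient families ℤ → A such that (i) any two α, β ∈ 𝔄 are local of some order, (ii) α(n)β ∈ 𝔄 for all α, β ∈ 𝔄 and n ∈ ℕ, and (iii) ∂α ∈ 𝔄 for all α ∈ 𝔄. Then 𝔄, equipped with the products (n) and with D = ∂, is a conformal algebra: it satisfies (C1) (for all α, β ∈ 𝔄 there is N with α(n)β = 0 for n ≥ N) and (C2) ((∂α)(n)β = −n·(α(n−1)β) for n ≥ 1, (∂α)(0)β = 0, and ∂(α(n)β) = (∂α)(n)β + α(n)(∂β)). -/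
/-!
The identities (C2) hold termwise, by `binom(n+1,s)(n+1-s) = (n+1) binom(n,s)` and, after
splitting `-m = s - (m+s)` in the Leibniz rule and shifting the index of the `s`-part,
`binom(n,s+1)(s+1) = binom(n,s)(n-s)`. For (C1), locality of order `N` says that the `N`-th
forward difference of `t ↦ α(n-t)β(m+t)` vanishes at `0` for all `n, m`; shifting `n, m`, it
vanishes identically, hence so do all higher differences, and `(α(n)β)(m)` is up to sign the
`n`-th difference at `0`.
-/

open Finset

/-- The `n`-th product of coefficient families, for a bilinear product `mul` on `A`:
`(α(n)β)(m) = Σ_{s=0}^n (-1)^s binom(n,s) mul(α(n-s), β(m+s))`. -/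
def nprodB {k A : Type} [Field k] [AddCommGroup A] [Module k A]
    (mul : A →ₗ[k] A →ₗ[k] A) (α β : ℤ → A) (n : ℕ) : ℤ → A :=
  fun m => ∑ s ∈ Finset.range (n + 1),
    ((-1 : ℤ) ^ s * (n.choose s : ℤ)) • mul (α ((n : ℤ) - s)) (β (m + s))

/-- The derivation `∂`: `(∂α)(m) = -m·α(m-1)`. -/
def delOp {A : Type} [AddCommGroup A] (α : ℤ → A) : ℤ → A :=
  fun m => (-m : ℤ) • α (m - 1)

open fwdDiff

section ForwardDifference

variable {G : Type*} [AddCommGroup G]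

theorem sum_range_neg_one_pow_mul_choose_smul_shift (f : ℤ → G) (N : ℕ) (y : ℤ) :
    ∑ s ∈ range (N + 1), ((-1 : ℤ) ^ s * N.choose s) • f (y + s) =
      (-1 : ℤ) ^ N • (Δ_[1])^[N] f y := by
  rw [fwdDiff_iter_eq_sum_shift, smul_sum]
  refine sum_congr rfl fun s hs => ?_
  have hsign : (-1 : ℤ) ^ N * (-1) ^ (N - s) = (-1) ^ s := by
    obtain ⟨d, rfl⟩ := Nat.exists_eq_add_of_le (Nat.lt_succ_iff.mp (mem_range.mp hs))
    rw [Nat.add_sub_cancel_left, pow_add, mul_assoc, ← mul_pow, neg_one_mul, neg_neg, one_pow,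
      mul_one]
  rw [smul_smul, ← mul_assoc, hsign, nsmul_one]

theorem fwdDiff_iter_eq_zero_of_le {f : ℤ → G} {N M : ℕ} (hf : (Δ_[1])^[N] f = 0)
    (hNM : N ≤ M) : (Δ_[1])^[M] f = 0 := by
  obtain ⟨d, rfl⟩ := Nat.exists_eq_add_of_le' hNM
  rw [Function.iterate_add_apply, hf]
  exact Function.iterate_fixed (fwdDiff_const 1 0) d

theorem sum_range_neg_one_pow_mul_choose_mul_smul_eq_shift (x : ℕ → G) (n : ℕ) :
    ∑ s ∈ range (n + 1), ((-1 : ℤ) ^ s * n.choose s * s) • x s =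
      ∑ s ∈ range (n + 1), ((-1 : ℤ) ^ s * n.choose s * -((n : ℤ) - s)) • x (s + 1) := by
  rw [sum_range_succ', sum_range_succ]
  simp only [Nat.cast_zero, mul_zero, zero_smul, add_zero, sub_self, neg_zero]
  refine sum_congr rfl fun s hs => ?_
  have habsorb := Nat.choose_succ_right_eq n s
  zify [Nat.le_of_lt (mem_range.mp hs)] at habsorb
  push_cast
  congr 1
  linear_combination (-(-1 : ℤ) ^ s) * habsorb

end ForwardDifference

section SeriesProducts

variable {k A : Type} [Field k] [AddCommGroup A] [Module k A] (mul : A →ₗ[k] A →ₗ[k] A)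

theorem nprodB_eq_zero_of_local {α β : ℤ → A} {N : ℕ}
    (hloc : ∀ m n : ℤ, ∑ s ∈ range (N + 1),
      ((-1 : ℤ) ^ s * (N.choose s : ℤ)) • mul (α (n - s)) (β (m + s)) = 0)
    {n : ℕ} (hn : N ≤ n) : nprodB mul α β n = 0 := by
  set g : ℤ → ℤ → ℤ → A := fun n' m' t => mul (α (n' - t)) (β (m' + t)) with hg
  have hshift : ∀ (M : ℕ) (n' m' t : ℤ), ∑ s ∈ range (M + 1),
      ((-1 : ℤ) ^ s * (M.choose s : ℤ)) • mul (α (n' - t - s)) (β (m' + t + s)) =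
        (-1 : ℤ) ^ M • (Δ_[1])^[M] (g n' m') t := by
    intro M n' m' t
    rw [← sum_range_neg_one_pow_mul_choose_smul_shift]
    simp only [hg, sub_add_eq_sub_sub, add_assoc]
  have hN : ∀ n' m', (Δ_[1])^[N] (g n' m') = 0 := fun n' m' => funext fun t => by
    have h := hloc (m' + t) (n' - t)
    rwa [hshift, (isUnit_neg_one.pow N).smul_eq_zero] at h
  funext m
  have h := hshift n n m 0
  simp only [sub_zero, add_zero] at h
  rw [nprodB, h, fwdDiff_iter_eq_zero_of_le (hN n m) hn, Pi.zero_apply, smul_zero, Pi.zero_apply]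

theorem nprodB_delOp_left_zero (α β : ℤ → A) : nprodB mul (delOp α) β 0 = 0 := by
  funext m
  simp [nprodB, delOp]

theorem nprodB_delOp_left_succ (α β : ℤ → A) (n : ℕ) :
    nprodB mul (delOp α) β (n + 1) = (-(n + 1) : ℤ) • nprodB mul α β n := by
  funext m
  simp only [nprodB, delOp, Pi.smul_apply, map_zsmul, LinearMap.smul_apply, smul_smul]
  rw [sum_range_succ, Nat.cast_add_one, sub_self, neg_zero, mul_zero, zero_smul, add_zero,
    smul_sum]
  refine sum_congr rfl fun s hs => ?_
  have habsorb := Nat.choose_mul_succ_eq n s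
  zify [(mem_range.mp hs).le] at habsorb
  have hidx : (n : ℤ) + 1 - s - 1 = n - s := by ring
  rw [hidx, smul_smul]
  congr 1
  linear_combination (-1 : ℤ) ^ s * habsorb

theorem delOp_nprodB (α β : ℤ → A) (n : ℕ) :
    delOp (nprodB mul α β n) = nprodB mul (delOp α) β n + nprodB mul α (delOp β) n := by
  funext m
  simp only [nprodB, delOp, Pi.add_apply, map_zsmul, LinearMap.smul_apply, smul_smul, smul_sum,
    ← sum_add_distrib]
  have hshift := sum_range_neg_one_pow_mul_choose_mul_smul_eq_shift
    (fun s : ℕ => mul (α (n - s)) (β (m - 1 + s))) n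
  simp only [Nat.cast_succ, sub_add_eq_sub_sub, sub_add_add_cancel] at hshift
  rw [sum_add_distrib, ← hshift, ← sum_add_distrib]
  refine sum_congr rfl fun s _ => ?_
  rw [sub_add_eq_add_sub, ← add_smul]
  congr 1
  ring

end SeriesProducts

theorem conformal_algebra_of_series_general
    {k A : Type} [Field k] [AddCommGroup A] [Module k A]
    (mul : A →ₗ[k] A →ₗ[k] A) (S : Submodule k (ℤ → A))
    (h1 : ∀ α ∈ S, ∀ β ∈ S, ∃ N : ℕ, ∀ m n : ℤ,
      ∑ s ∈ Finset.range (N + 1),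
        ((-1 : ℤ) ^ s * (N.choose s : ℤ)) • mul (α (n - s)) (β (m + s)) = 0) :
    (∀ α ∈ S, ∀ β ∈ S, ∃ N : ℕ, ∀ n : ℕ, N ≤ n → nprodB mul α β n = 0) ∧
    (∀ α ∈ S, ∀ β ∈ S, ∀ n : ℕ,
      nprodB mul (delOp α) β (n + 1) = (-(n + 1) : ℤ) • nprodB mul α β n) ∧
    (∀ α ∈ S, ∀ β ∈ S, nprodB mul (delOp α) β 0 = 0) ∧
    (∀ α ∈ S, ∀ β ∈ S, ∀ n : ℕ,
      delOp (nprodB mul α β n) = nprodB mul (delOp α) β n + nprodB mul α (delOp β) n) := by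
  refine ⟨fun α hα β hβ => ?_, fun α _ β _ n => nprodB_delOp_left_succ mul α β n,
    fun α _ β _ => nprodB_delOp_left_zero mul α β, fun α _ β _ n => delOp_nprodB mul α β n⟩
  obtain ⟨N, hN⟩ := h1 α hα β hβ
  exact ⟨N, fun n hn => nprodB_eq_zero_of_local mul hN hn⟩

/-- A space of pairwise local coefficient families closed under all the
`n`-th products and under `∂` is a conformal algebra: it satisfies (C1) and (C2). -/
theorem conformal_algebra_of_series
    {k A : Type} [Field k] [CharZero k] [AddCommGroup A] [Module k A]
    (mul : A →ₗ[k] A →ₗ[k] A) (S : Submodule k (ℤ → A))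
    (h1 : ∀ α ∈ S, ∀ β ∈ S, ∃ N : ℕ, ∀ m n : ℤ,
      ∑ s ∈ Finset.range (N + 1),
        ((-1 : ℤ) ^ s * (N.choose s : ℤ)) • mul (α (n - s)) (β (m + s)) = 0)
    (h2 : ∀ α ∈ S, ∀ β ∈ S, ∀ n : ℕ, nprodB mul α β n ∈ S)
    (h3 : ∀ α ∈ S, delOp α ∈ S) :
    (∀ α ∈ S, ∀ β ∈ S, ∃ N : ℕ, ∀ n : ℕ, N ≤ n → nprodB mul α β n = 0) ∧
    (∀ α ∈ S, ∀ β ∈ S, ∀ n : ℕ,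
      nprodB mul (delOp α) β (n + 1) = (-(n + 1) : ℤ) • nprodB mul α β n) ∧
    (∀ α ∈ S, ∀ β ∈ S, nprodB mul (delOp α) β 0 = 0) ∧
    (∀ α ∈ S, ∀ β ∈ S, ∀ n : ℕ,
      delOp (nprodB mul α β n) = nprodB mul (delOp α) β n + nprodB mul α (delOp β) n) :=
  conformal_algebra_of_series_general mul S h1
end

section
/- Let 𝔄 be a conformal algebra over a field k of characteristic zero (only axioms (C1) and (C2) are assumed), and define new products a[n]b = a(n)b − Σ_{s≥0} (−1)^{n+s}·D^{(s)}(b(n+s)a) (a finite sum by (C1)). Then these products satisfy quasi-symmetry: a[n]b = −Σ_{s≥0} (−1)^{s+n}·D^{(s)}(b[n+s]a) for all a, b ∈ 𝔄 and n ∈ ℕ, and moreover for fixed a, b one has a[n]b = 0 for all sufficiently large n. -/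
open Finset

variable {𝕜 : Type} [Field 𝕜]

namespace ConfAlg
variable (C : ConfAlg 𝕜)

lemma dpow_zero_right (s : ℕ) : C.dpow s 0 = 0 := by simp [dpow]

lemma dpow_zero_fst (x : C.A) : C.dpow 0 x = x := by simp [dpow]

lemma dpow_smul (s : ℕ) (c : 𝕜) (x : C.A) : C.dpow s (c • x) = c • C.dpow s x := by
  simp [dpow, map_smul, smul_comm c]

lemma dpow_sub (s : ℕ) (x y : C.A) : C.dpow s (x - y) = C.dpow s x - C.dpow s y := by
  simp [dpow, map_sub, smul_sub]

lemma dpow_sum {ι : Type*} (s : ℕ) (t : Finset ι) (f : ι → C.A) :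
    C.dpow s (∑ i ∈ t, f i) = ∑ i ∈ t, C.dpow s (f i) := by
  simp [dpow, map_sum, Finset.smul_sum]

lemma dpow_dpow [CharZero 𝕜] (s t : ℕ) (x : C.A) :
    C.dpow s (C.dpow t x) = (((s + t).choose s : ℕ) : 𝕜) • C.dpow (s + t) x := by
  have hD : (C.D ^ s) ((C.D ^ t) x) = (C.D ^ (s + t)) x := by
    rw [pow_add]; rfl
  rw [dpow, dpow, dpow, map_smul, hD, smul_smul, smul_smul]
  congr 1
  have h := Nat.add_choose_mul_factorial_mul_factorial s t
  have hs : (s.factorial : 𝕜) ≠ 0 := Nat.cast_ne_zero.mpr s.factorial_ne_zero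
  have ht : (t.factorial : 𝕜) ≠ 0 := Nat.cast_ne_zero.mpr t.factorial_ne_zero
  have hst : ((s + t).factorial : 𝕜) ≠ 0 := Nat.cast_ne_zero.mpr (s + t).factorial_ne_zero
  have h' : (((s + t).choose t : ℕ) : 𝕜) * s.factorial * t.factorial = (s + t).factorial := by
    exact_mod_cast congrArg (Nat.cast : ℕ → 𝕜) h
  rw [Nat.choose_symm_add]
  field_simp
  linear_combination -h'

end ConfAlg

lemma key_sum_s17 {A : Type} [AddCommGroup A] [Module 𝕜 A] (f : ℕ → A) (M : ℕ)
    (hf : ∀ m, M ≤ m → f m = 0) :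
    ∑ s ∈ range M, ∑ t ∈ range M,
      ((-1:𝕜)^t * (((s+t).choose s : ℕ) : 𝕜)) • f (s+t) = f 0 := by
  set g : ℕ × ℕ → A := fun p => ((-1:𝕜)^p.2 * (((p.1+p.2).choose p.1 : ℕ) : 𝕜)) • f (p.1+p.2)
    with hg
  have h1 : ∑ s ∈ range M, ∑ t ∈ range M,
      ((-1:𝕜)^t * (((s+t).choose s : ℕ) : 𝕜)) • f (s+t)
      = ∑ p ∈ range M ×ˢ range M, g p := (Finset.sum_product' _ _ _).symm
  rw [h1]
  have hsub : (range M).biUnion (fun m => Finset.HasAntidiagonal.antidiagonal m) ⊆ range M ×ˢ range M := by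
    intro p hp
    simp only [Finset.mem_biUnion, Finset.mem_range, Finset.HasAntidiagonal.mem_antidiagonal] at hp
    obtain ⟨m, hm, hpm⟩ := hp
    simp only [Finset.mem_product, Finset.mem_range]
    constructor <;> omega
  have h2 : ∑ p ∈ range M ×ˢ range M, g p
      = ∑ p ∈ (range M).biUnion (fun m => Finset.HasAntidiagonal.antidiagonal m), g p := by
    refine (Finset.sum_subset hsub ?_).symm
    intro p hp hnp
    have : M ≤ p.1 + p.2 := by
      by_contra hc
      exact hnp (Finset.mem_biUnion.mpr ⟨p.1 + p.2, Finset.mem_range.mpr (by omega),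
        Finset.HasAntidiagonal.mem_antidiagonal.mpr rfl⟩)
    simp [hg, hf _ this]
  rw [h2]
  have hdisj : (↑(range M) : Set ℕ).PairwiseDisjoint (fun m => Finset.HasAntidiagonal.antidiagonal m) := by
    intro m _ m' _ hne
    simp only [Function.onFun, Finset.disjoint_left]
    intro p hp hp'
    rw [Finset.HasAntidiagonal.mem_antidiagonal] at hp hp'
    exact hne (hp ▸ hp')
  rw [Finset.sum_biUnion hdisj]
  have h3 : ∀ m ∈ range M, ∑ p ∈ Finset.HasAntidiagonal.antidiagonal m, g p
      = (if m = 0 then (1:𝕜) else 0) • f m := by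
    intro m _
    rw [Finset.Nat.sum_antidiagonal_eq_sum_range_succ_mk]
    have hterm : ∀ k ∈ range (m+1), g (k, m - k)
        = (fun j => ((-1:𝕜)^j * ((m.choose j : ℕ) : 𝕜)) • f m) (m - k) := by
      intro k hk
      rw [Finset.mem_range] at hk
      have hkm : k ≤ m := by omega
      simp only [hg, g]
      rw [Nat.add_sub_cancel' hkm]
      congr 3
      rw [Nat.choose_symm hkm]
    rw [Finset.sum_congr rfl hterm]
    have hrefl := Finset.sum_range_reflect
      (fun j => ((-1:𝕜)^j * ((m.choose j : ℕ) : 𝕜)) • f m) (m+1)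
    simp only [Nat.add_sub_cancel] at hrefl
    rw [hrefl, ← Finset.sum_smul]
    congr 1
    have hz := Int.alternating_sum_range_choose (n := m)
    have := congrArg (fun z : ℤ => (z : 𝕜)) hz
    push_cast at this
    simpa using this
  rw [Finset.sum_congr rfl h3]
  rcases Nat.eq_zero_or_pos M with hM | hM
  · subst hM; simp [hf 0 le_rfl]
  · have : ∀ m ∈ range M, (if m = 0 then (1:𝕜) else 0) • f m
        = if m = 0 then f m else 0 := by intro m _; split <;> simp
    rw [Finset.sum_congr rfl this, Finset.sum_ite_eq' (range M) 0 f]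
    simp [Finset.mem_range, hM]

/-- Let `br n a b = a[n]b = a(n)b - Σ_{s≥0} (-1)^{n+s} D^{(s)}(b(n+s)a)`
(characterized via any bound `N` beyond which the tail terms vanish). Then the products
`[n]` satisfy (C1) and quasi-symmetry. -/
theorem minus_products_quasi_symmetric
    [CharZero 𝕜] (C : ConfAlg 𝕜) (br : ℕ → C.A → C.A → C.A)
    (hbr : ∀ (a b : C.A) (n N : ℕ), (∀ s : ℕ, N ≤ s → C.mul (n + s) b a = 0) →
      br n a b = C.mul n a b -
        ∑ s ∈ Finset.range N, ((-1 : 𝕜) ^ (n + s)) • C.dpow s (C.mul (n + s) b a)) :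
    (∀ a b : C.A, ∃ N : ℕ, ∀ n : ℕ, N ≤ n → br n a b = 0) ∧
    (∀ (a b : C.A) (n N : ℕ), (∀ s : ℕ, N ≤ s → br (n + s) b a = 0) →
      br n a b = -∑ s ∈ Finset.range N, ((-1 : 𝕜) ^ (s + n)) • C.dpow s (br (n + s) b a)) := by
  constructor
  · intro a b
    obtain ⟨N1, h1⟩ := C.loc a b
    obtain ⟨N2, h2⟩ := C.loc b a
    refine ⟨max N1 N2, fun n hn => ?_⟩
    rw [hbr a b n 0 (fun s hs => h2 (n + s) (by omega))]
    simp [h1 n (by omega)]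
  · intro a b n N hN
    obtain ⟨N1, h1⟩ := C.loc a b
    obtain ⟨N2, h2⟩ := C.loc b a
    set M := max N (max N1 N2) with hMdef
    have hMN : N ≤ M := le_max_left _ _
    have hM1 : N1 ≤ M := le_trans (le_max_left _ _) (le_max_right _ _)
    have hM2 : N2 ≤ M := le_trans (le_max_right _ _) (le_max_right _ _)
    have hext : ∑ s ∈ range N, ((-1:𝕜)^(s+n)) • C.dpow s (br (n+s) b a)
        = ∑ s ∈ range M, ((-1:𝕜)^(s+n)) • C.dpow s (br (n+s) b a) := by
      apply Finset.sum_subset (Finset.range_subset_range.mpr hMN)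
      intro s _ hns
      rw [Finset.mem_range, not_lt] at hns
      rw [hN s hns, C.dpow_zero_right, smul_zero]
    rw [hext]
    rw [hbr a b n M (fun s hs => h2 (n + s) (by omega))]
    have hinner : ∀ s ∈ range M, ((-1:𝕜)^(s+n)) • C.dpow s (br (n+s) b a)
        = ((-1:𝕜)^(s+n)) • C.dpow s (C.mul (n+s) b a)
          - ∑ t ∈ range M, ((-1:𝕜)^t * (((s+t).choose s : ℕ) : 𝕜)) •
              C.dpow (s+t) (C.mul (n+(s+t)) a b) := by
      intro s _
      rw [hbr b a (n+s) M (fun t ht => h1 (n + s + t) (by omega))]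
      rw [C.dpow_sub, smul_sub]
      congr 1
      rw [C.dpow_sum, Finset.smul_sum]
      apply Finset.sum_congr rfl
      intro t _
      rw [C.dpow_smul, C.dpow_dpow, smul_smul, smul_smul]
      have harg : n + s + t = n + (s + t) := add_assoc n s t
      rw [harg]
      congr 1
      have hsgn : ((-1:𝕜))^(s+n) * (-1:𝕜)^(n+(s+t)) = (-1:𝕜)^t := by
        rw [← pow_add]
        have he : (s+n) + (n+(s+t)) = 2*(n+s) + t := by ring
        rw [he, pow_add, pow_mul]
        norm_num
      rw [hsgn]
    rw [Finset.sum_congr rfl hinner, Finset.sum_sub_distrib, neg_sub]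
    have hkey : ∑ s ∈ range M, ∑ t ∈ range M,
        ((-1:𝕜)^t * (((s+t).choose s : ℕ) : 𝕜)) • C.dpow (s+t) (C.mul (n+(s+t)) a b)
        = C.mul n a b := by
      have h := key_sum_s17 (𝕜 := 𝕜) (fun m => C.dpow m (C.mul (n+m) a b)) M
        (fun m hm => by
          show C.dpow m (C.mul (n+m) a b) = 0
          rw [h1 (n+m) (by omega), C.dpow_zero_right])
      simpa [C.dpow_zero_fst] using h
    rw [hkey]
    have hsum_eq : ∑ s ∈ range M, ((-1:𝕜)^(n+s)) • C.dpow s (C.mul (n+s) b a)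
        = ∑ s ∈ range M, ((-1:𝕜)^(s+n)) • C.dpow s (C.mul (n+s) b a) := by
      apply Finset.sum_congr rfl
      intro s _
      congr 1
      rw [add_comm]
    rw [hsum_eq]
end
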